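/- Suppose that for every integer n ≥ 2 the kernel K̄ₙ from V to Vⁿ reproduces R^{⊗n}. Then for every measurable set B₀ ⊆ V with R(V ∖ B₀) = 0 there exists a measurable set B ⊆ B₀ with R(V ∖ B) = 0 such that for every integer n ≥ 2 and every v ∈ B one has K̄ₙ(v, Vⁿ ∖ Bⁿ) = 0; that is, K̄ₙ(v,·)-almost every n-tuple (v₁,…,vₙ) lies in Bⁿ. -/

import Mathlib

open MeasureTheory ProbabilityTheory

/-- Suppose that for every integer `n ≥ 2` the kernel `K̄ₙ` from `V`
to `Vⁿ` reproduces `R^{⊗n}` (i.e. the mixture `A ↦ ∫ K̄ₙ(v, A) dR(v)` equals the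
`n`-fold product measure).  Then for every measurable `B₀ ⊆ V` with `R(V ∖ B₀) = 0`
there is a measurable `B ⊆ B₀` with `R(V ∖ B) = 0` such that for every `n ≥ 2` and
every `v ∈ B` one has `K̄ₙ(v, Vⁿ ∖ Bⁿ) = 0`. -/
theorem stmt0 {V : Type*} [MeasurableSpace V]
    (R : Measure V) [IsFiniteMeasure R]
    (K : (n : ℕ) → Kernel V (Fin n → V))
    [∀ n, IsSFiniteKernel (K n)]
    (hK : ∀ n, 2 ≤ n → ∀ A : Set (Fin n → V), MeasurableSet A →
      lintegral R (fun v => K n v A) = Measure.pi (fun _ : Fin n => R) A)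
    (B₀ : Set V) (hB₀m : MeasurableSet B₀) (hB₀ : R B₀ᶜ = 0) :
    ∃ B : Set V, MeasurableSet B ∧ B ⊆ B₀ ∧ R Bᶜ = 0 ∧
      ∀ n, 2 ≤ n → ∀ v ∈ B, K n v {w : Fin n → V | ∀ i, w i ∈ B}ᶜ = 0 := by
  classical
  -- measurability of the cylinder set
  have hcyl : ∀ (m : ℕ) (C : Set V), MeasurableSet C →
      MeasurableSet {w : Fin m → V | ∀ i, w i ∈ C} := by
    intro m C hC
    have : {w : Fin m → V | ∀ i, w i ∈ C} = Set.pi Set.univ fun _ => C := by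
      ext w; simp [Set.mem_pi]
    rw [this]; exact MeasurableSet.univ_pi fun _ => hC
  -- the "good" set associated to a set C and index m
  set G : ℕ → Set V → Set V :=
    fun m C => {v | K m v {w : Fin m → V | ∀ i, w i ∈ C}ᶜ = 0} with hGdef
  have hGm : ∀ m (C : Set V), MeasurableSet C → MeasurableSet (G m C) := by
    intro m C hC
    have : G m C = (fun v => K m v {w : Fin m → V | ∀ i, w i ∈ C}ᶜ) ⁻¹' {0} := by
      ext v; simp [hGdef]
    rw [this]
    exact (Kernel.measurable_coe (K m) (hcyl m C hC).compl) (measurableSet_singleton 0)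
  have hGnull : ∀ m, 2 ≤ m → ∀ C : Set V, MeasurableSet C → R Cᶜ = 0 →
      R (G m C)ᶜ = 0 := by
    intro m hm C hC hCnull
    have hA := hcyl m C hC
    have hpi : Measure.pi (fun _ : Fin m => R) {w : Fin m → V | ∀ i, w i ∈ C}ᶜ = 0 := by
      have hsub : {w : Fin m → V | ∀ i, w i ∈ C}ᶜ ⊆
          ⋃ i, (fun w : Fin m → V => w i) ⁻¹' Cᶜ := by
        intro w hw
        simp only [Set.mem_compl_iff, Set.mem_setOf_eq, not_forall] at hw
        obtain ⟨i, hi⟩ := hw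
        exact Set.mem_iUnion.2 ⟨i, hi⟩
      refine measure_mono_null hsub (measure_iUnion_null fun i => ?_)
      exact Measure.pi_eval_preimage_null _ hCnull
    have hint : lintegral R (fun v => K m v {w : Fin m → V | ∀ i, w i ∈ C}ᶜ) = 0 := by
      rw [hK m hm _ hA.compl]; exact hpi
    have hae := (lintegral_eq_zero_iff
      (Kernel.measurable_coe (K m) hA.compl)).mp hint
    have : ∀ᵐ v ∂ R, K m v {w : Fin m → V | ∀ i, w i ∈ C}ᶜ = 0 := hae
    have h0 := ae_iff.mp this
    have hset : (G m C)ᶜ = {v | ¬ K m v {w : Fin m → V | ∀ i, w i ∈ C}ᶜ = 0} := by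
      ext v; simp [hGdef]
    rw [hset]; exact h0
  -- the decreasing sequence of sets
  let seq : ℕ → Set V := fun k => Nat.rec B₀ (fun _ C => C ∩ ⋂ m, G (m + 2) C) k
  have hseq_succ : ∀ k, seq (k + 1) = seq k ∩ ⋂ m, G (m + 2) (seq k) := fun _ => rfl
  have hseqm : ∀ k, MeasurableSet (seq k) := by
    intro k
    induction k with
    | zero => exact hB₀m
    | succ k ih =>
      rw [hseq_succ]
      exact ih.inter (MeasurableSet.iInter fun m => hGm _ _ ih)
  have hseqnull : ∀ k, R (seq k)ᶜ = 0 := by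
    intro k
    induction k with
    | zero => exact hB₀
    | succ k ih =>
      rw [hseq_succ, Set.compl_inter]
      refine measure_union_null ih ?_
      rw [Set.compl_iInter]
      exact measure_iUnion_null fun m =>
        hGnull (m + 2) (by omega) (seq k) (hseqm k) ih
  have hanti : ∀ k, seq (k + 1) ⊆ seq k := by
    intro k; rw [hseq_succ]; exact Set.inter_subset_left
  refine ⟨⋂ k, seq k, MeasurableSet.iInter hseqm, ?_, ?_, ?_⟩
  · exact Set.iInter_subset seq 0
  · rw [Set.compl_iInter]
    exact measure_iUnion_null hseqnull
  · intro n hn v hv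
    obtain ⟨m, rfl⟩ : ∃ m, n = m + 2 := ⟨n - 2, by omega⟩
    have hU : {w : Fin (m + 2) → V | ∀ i, w i ∈ ⋂ k, seq k}ᶜ =
        ⋃ k, {w : Fin (m + 2) → V | ∀ i, w i ∈ seq k}ᶜ := by
      rw [← Set.compl_iInter]
      congr 1
      ext w
      simp only [Set.mem_setOf_eq, Set.mem_iInter]
      exact forall_comm
    rw [hU]
    refine measure_iUnion_null fun k => ?_
    have hv' : v ∈ seq (k + 1) := Set.mem_iInter.mp hv (k + 1)
    rw [hseq_succ] at hv'
    have := Set.mem_iInter.mp hv'.2 m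
    simpa [hGdef] using this
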